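/- For the connection $\nabla^*_X Y = \overline\nabla_X Y - \lambda(\eta(X)\varphi Y + \eta(Y)\varphi X)$ ($\lambda = k_1/k_2$ constant) on a Sasakian manifold, the curvature tensor $R^*(X,Y)Z = \nabla^*_X\nabla^*_Y Z - \nabla^*_Y\nabla^*_X Z - \nabla^*_{[X,Y]}Z$ satisfies $R^*(X,Y)Z = \overline{R}(X,Y)Z - \lambda\,\overline{g}(Z,\overline\nabla_X\xi)\varphi Y + \lambda\,\overline{g}(Z,\overline\nabla_Y\xi)\varphi X + \lambda\big(\overline{g}(X,\overline\nabla_Y\xi) - \overline{g}(Y,\overline\nabla_X\xi)\big)\varphi Z + \lambda\big(\eta(X)\overline{g}(Y,Z) - \eta(Y)\overline{g}(X,Z)\big)\xi + (2\lambda + \lambda^2)\big(\eta(Y)\eta(Z)X - \eta(X)\eta(Z)Y\big)$. -/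

import Mathlib

/-- for the connection `∇*_X Y = ∇̄_X Y - λ(η(X)φY + η(Y)φX)`
(`λ` constant) on a Sasakian manifold, the curvature
`R*(X,Y)Z = ∇*_X∇*_Y Z - ∇*_Y∇*_X Z - ∇*_{[X,Y]}Z` satisfies
`R*(X,Y)Z = R̄(X,Y)Z - λ ḡ(Z,∇̄_Xξ)φY + λ ḡ(Z,∇̄_Yξ)φX
  + λ(ḡ(X,∇̄_Yξ) - ḡ(Y,∇̄_Xξ))φZ + λ(η(X)ḡ(Y,Z) - η(Y)ḡ(X,Z))ξ
  + (2λ + λ²)(η(Y)η(Z)X - η(X)η(Z)Y)`. -/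
theorem ricci_connection_curvature
    (C : Type*) [CommRing C]
    (V : Type*) [LieRing V] [Module C V]
    (D : V → C → C)
    (g : V →ₗ[C] V →ₗ[C] C)
    (φ : V →ₗ[C] V) (ξ : V) (η : V →ₗ[C] C) (lam : C)
    (nabla nablaStar : V → V → V)
    -- `λ` is constant
    (hconst : ∀ X, D X lam = 0)
    -- `D X` is a derivation for each `X`
    (hDadd : ∀ X f f', D X (f + f') = D X f + D X f')
    (hDmul : ∀ X f f', D X (f * f') = f * D X f' + f' * D X f)
    -- `∇̄` is a connection: additivity, `C`-linearity in `X`, Leibniz rule in `Y`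
    (hNaddX : ∀ X X' Y, nabla (X + X') Y = nabla X Y + nabla X' Y)
    (hNsmulX : ∀ (f : C) X Y, nabla (f • X) Y = f • nabla X Y)
    (hNaddY : ∀ X Y Y', nabla X (Y + Y') = nabla X Y + nabla X Y')
    (hNLeibniz : ∀ X (f : C) Y, nabla X (f • Y) = D X f • Y + f • nabla X Y)
    -- compatibility and torsion-freeness of `∇̄`
    (hmetric : ∀ X Y Z, D X (g Y Z) = g (nabla X Y) Z + g Y (nabla X Z))
    (htorsionfree : ∀ X Y, nabla X Y - nabla Y X = ⁅X, Y⁆)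
    (hgsymm : ∀ X Y, g X Y = g Y X)
    -- Sasakian structure
    (hη : ∀ X, η X = g X ξ)
    (hnablaξ : ∀ X, nabla X ξ = -φ X)
    (hnablaφ : ∀ X Y, nabla X (φ Y) - φ (nabla X Y) = g X Y • ξ - η Y • X)
    (hφξ : φ ξ = 0)
    (hφ2 : ∀ X, φ (φ X) = -X + η X • ξ)
    -- definition of `∇*`
    (hdef : ∀ X Y, nablaStar X Y
      = nabla X Y - lam • (η X • φ Y + η Y • φ X)) :
    ∀ X Y Z,
      nablaStar X (nablaStar Y Z) - nablaStar Y (nablaStar X Z)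
          - nablaStar ⁅X, Y⁆ Z
        = (nabla X (nabla Y Z) - nabla Y (nabla X Z) - nabla ⁅X, Y⁆ Z)
          - (lam * g Z (nabla X ξ)) • φ Y
          + (lam * g Z (nabla Y ξ)) • φ X
          + (lam * (g X (nabla Y ξ) - g Y (nabla X ξ))) • φ Z
          + (lam * (η X * g Y Z - η Y * g X Z)) • ξ
          + (2 * lam + lam ^ 2) • ((η Y * η Z) • X - (η X * η Z) • Y) := by
  intro X Y Z
  -- basic consequences
  have hN0 : ∀ W, nabla W (0:V) = 0 := by
    intro W
    have h := hNaddY W 0 0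
    rw [add_zero] at h
    exact right_eq_add.mp h
  have hNneg : ∀ W A, nabla W (-A) = -nabla W A := by
    intro W A
    have h := hNaddY W A (-A)
    rw [add_neg_cancel, hN0] at h
    exact (eq_neg_of_add_eq_zero_right h.symm)
  have hNsub : ∀ W A B, nabla W (A - B) = nabla W A - nabla W B := by
    intro W A B
    rw [sub_eq_add_neg, hNaddY, hNneg, ← sub_eq_add_neg]
  have hNXneg : ∀ A B, nabla (-A) B = -nabla A B := by
    intro A B
    rw [← neg_one_smul C A, hNsmulX, neg_one_smul]
  have hNXsub : ∀ A A' B, nabla (A - A') B = nabla A B - nabla A' B := by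
    intro A A' B
    rw [sub_eq_add_neg, hNaddX, hNXneg, ← sub_eq_add_neg]
  have hunit : ∀ W : V, (η ξ) • W = W := by
    intro W
    have h := hnablaφ W ξ
    rw [hφξ, hN0, hnablaξ, map_neg, hφ2, ← hη] at h
    linear_combination (norm := module) (1 : C) • h
  have hηφξ : ∀ W, η (φ W) • ξ = 0 := by
    intro W
    have h := hφ2 (φ W)
    have h2 : φ (φ (φ W)) = -φ W := by
      rw [hφ2 W, map_add, map_neg, map_smul, hφξ, smul_zero, add_zero]
    rw [h2] at h
    linear_combination (norm := module) (-1 : C) • h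
  have hηφ : ∀ W, η (φ W) = 0 := by
    intro W
    have h := congrArg η (hηφξ W)
    rw [map_smul, map_zero, smul_eq_mul] at h
    calc η (φ W) = η (η ξ • φ W) := by rw [hunit]
      _ = η ξ * η (φ W) := by rw [map_smul, smul_eq_mul]
      _ = 0 := by rw [mul_comm]; exact h
  have hDη : ∀ A B, D A (η B) = η (nabla A B) - g B (φ A) := by
    intro A B
    calc D A (η B) = D A (g B ξ) := by rw [hη]
      _ = g (nabla A B) ξ + g B (nabla A ξ) := hmetric A B ξ
      _ = η (nabla A B) - g B (φ A) := by
          rw [hnablaξ, map_neg, ← hη, ← sub_eq_add_neg]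
  have hNφ : ∀ A B, nabla A (φ B) = φ (nabla A B) + (g A B • ξ - η B • A) := by
    intro A B
    have h := hnablaφ A B
    linear_combination (norm := module) (1 : C) • h
  have hbr : ⁅X, Y⁆ = nabla X Y - nabla Y X := (htorsionfree X Y).symm
  rw [hbr, hNXsub]
  simp only [hdef, hNXsub, hNsub, hNaddY, hNLeibniz, hconst, hDη, hNφ, hφ2, hηφ, hnablaξ,
    map_add, map_sub, map_neg, map_smul, map_zero, smul_eq_mul, zero_smul, smul_zero,
    mul_zero, zero_mul, add_zero, zero_add, sub_zero, smul_add, smul_sub, smul_neg]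
  rw [hgsymm Y X]
  module
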